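/- arXiv:math-ph/0702024 — 2 statements merged into one kernel-verified Lean document; each statement's English description precedes it below -/
import Mathlib

section
/- Let H and ΔH be Hermitian n×n complex matrices, set H̃ = H + ΔH, and let ħ > 0. Let t ↦ ρ_t and t ↦ ρ̃_t be differentiable families of positive definite, unit-trace n×n complex matrices satisfying iħ dρ_t/dt = [H, ρ_t] and iħ dρ̃_t/dt = [H̃, ρ̃_t] (possibly with different initial conditions). Then the quantum relative entropy D(ρ_t‖ρ̃_t) = tr(ρ_t(log ρ_t − log ρ̃_t)) is differentiable in t and d/dt D(ρ_t‖ρ̃_t) = (i/ħ) tr(ρ_t [ΔH, log ρ̃_t]). -/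
open Matrix
open scoped ComplexOrder

/-- Matrix logarithm of a Hermitian matrix, defined through the functional calculus
on its (real) spectrum. -/
noncomputable def mlog {n : ℕ} {A : Matrix (Fin n) (Fin n) ℂ} (hA : A.IsHermitian) :
    Matrix (Fin n) (Fin n) ℂ :=
  hA.cfc Real.log

/-!
Both evolutions are unitary conjugation flows: a solution of `f' = [K, f]` is
`f s = exp((s - t) K) f t exp((t - s) K)`, and for `K = H / (iħ)` skew-Hermitian these
exponentials are unitary. The functional calculus commutes with unitary conjugation, so
`log ρ_s` and `log ρ̃_s` solve the same commutator equations as `ρ_s` and `ρ̃_s`. For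
`A' = [K₁, A]` and `B' = [K₂, B]`, cyclicity of the trace gives
`d/ds tr(A B) = tr(A [K₂ - K₁, B])`: this vanishes for `tr(ρ log ρ)` and equals
`tr(ρ [ΔH / (iħ), log ρ̃])` for the cross term.
-/

open NormedSpace

section ConjugationFlow

variable {𝔸 : Type*} [NormedRing 𝔸] [NormedAlgebra ℝ 𝔸] [CompleteSpace 𝔸]

theorem exp_sub_smul_mul_exp_sub_smul (K : 𝔸) (s t : ℝ) :
    exp ((s - t) • K) * exp ((t - s) • K) = 1 := by
  let +nondep : NormedAlgebra ℚ 𝔸 := .restrictScalars ℚ ℝ 𝔸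
  rw [← NormedSpace.exp_add_of_commute (((Commute.refl K).smul_left _).smul_right _),
    ← add_smul, sub_add_sub_cancel, sub_self, zero_smul, exp_zero]

theorem hasDerivAt_exp_sub_smul (K : 𝔸) (t u : ℝ) :
    HasDerivAt (fun s : ℝ => exp ((s - t) • K)) (exp ((u - t) • K) * K) u :=
  (hasDerivAt_exp_smul_const K (u - t)).comp_sub_const u t

theorem hasDerivAt_exp_const_sub_smul (K : 𝔸) (t u : ℝ) :
    HasDerivAt (fun s : ℝ => exp ((t - s) • K)) (-(K * exp ((t - u) • K))) u :=
  (hasDerivAt_exp_smul_const' K (t - u)).comp_const_sub t u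

theorem hasDerivAt_exp_smul_conj (K X : 𝔸) (t : ℝ) :
    HasDerivAt (fun s : ℝ => exp ((s - t) • K) * X * exp ((t - s) • K)) (K * X - X * K) t := by
  convert ((hasDerivAt_exp_sub_smul K t t).mul_const X).fun_mul
    (hasDerivAt_exp_const_sub_smul K t t) using 1
  simp [sub_eq_add_neg]

theorem eq_exp_smul_conj_of_hasDerivAt_commutator {f : ℝ → 𝔸} (K : 𝔸)
    (hf : ∀ u, HasDerivAt f (K * f u - f u * K) u) (s t : ℝ) :
    f s = exp ((s - t) • K) * f t * exp ((t - s) • K) := by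
  set g : ℝ → 𝔸 := fun u => exp ((t - u) • K) * f u * exp ((u - t) • K)
  have hg : ∀ u, HasDerivAt g 0 u := fun u => by
    convert ((hasDerivAt_exp_const_sub_smul K t u).fun_mul (hf u)).fun_mul
      (hasDerivAt_exp_sub_smul K t u) using 1
    rw [((Commute.refl K).smul_right (t - u)).exp_right.eq,
      ← ((Commute.refl K).smul_right (u - t)).exp_right.eq]
    noncomm_ring
  have hgs : g s = f t := by
    rw [is_const_of_deriv_eq_zero (fun u => (hg u).differentiableAt) (fun u => (hg u).deriv) s t]
    simp [g]
  rw [← hgs]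
  simp only [g, ← mul_assoc, exp_sub_smul_mul_exp_sub_smul, one_mul]
  rw [mul_assoc, exp_sub_smul_mul_exp_sub_smul, mul_one]

end ConjugationFlow

section MatrixFlow

variable {𝕜 ι : Type*} [RCLike 𝕜] [Fintype ι]

-- `HasDerivAt` depends only on the topology, so inside proofs any norm inducing the product
-- topology may be put on matrices: the sup norm for entries, the `L∞` operator norm for `exp`.

theorem HasDerivAt.matrix_trace {f : ℝ → Matrix ι ι 𝕜} {f' : Matrix ι ι 𝕜} {t : ℝ}
    (h : HasDerivAt f f' t) : HasDerivAt (fun s => trace (f s)) (trace f') t :=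
  let := Matrix.normedAddCommGroup (n := ι) (m := ι) (α := 𝕜)
  let := Matrix.normedSpace (n := ι) (m := ι) (α := 𝕜) (R := ℝ)
  HasDerivAt.fun_sum fun i _ => hasDerivAt_pi.1 (hasDerivAt_pi.1 h i) i

theorem hasDerivAt_inv_smul_commutator {ρ ρ' : ℝ → Matrix ι ι 𝕜} {H : Matrix ι ι 𝕜} {c : 𝕜}
    (hc : c ≠ 0) (hdiff : ∀ t i j, HasDerivAt (fun s => ρ s i j) (ρ' t i j) t)
    (heq : ∀ t, c • ρ' t = H * ρ t - ρ t * H) (t : ℝ) :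
    HasDerivAt ρ (c⁻¹ • H * ρ t - ρ t * (c⁻¹ • H)) t := by
  let := Matrix.normedAddCommGroup (n := ι) (m := ι) (α := 𝕜)
  let := Matrix.normedSpace (n := ι) (m := ι) (α := 𝕜) (R := ℝ)
  rw [smul_mul_assoc, mul_smul_comm, ← smul_sub, ← heq, inv_smul_smul₀ hc]
  exact hasDerivAt_pi.2 fun i => hasDerivAt_pi.2 (hdiff t i)

variable [DecidableEq ι]

theorem hasDerivAt_trace_mul_of_commutator {A B : ℝ → Matrix ι ι 𝕜} {K₁ K₂ : Matrix ι ι 𝕜}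
    {t : ℝ} (hA : HasDerivAt A (K₁ * A t - A t * K₁) t)
    (hB : HasDerivAt B (K₂ * B t - B t * K₂) t) :
    HasDerivAt (fun s => trace (A s * B s))
      (trace (A t * ((K₂ - K₁) * B t - B t * (K₂ - K₁)))) t := by
  let := Matrix.linftyOpNormedRing (n := ι) (α := 𝕜)
  let := Matrix.linftyOpNormedAlgebra (n := ι) (α := 𝕜) (R := ℝ)
  convert (hA.fun_mul hB).matrix_trace using 1
  simp only [mul_sub, sub_mul, trace_add, trace_sub, mul_assoc]
  rw [trace_mul_comm K₁, mul_assoc]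
  ring

theorem cfc_unitary_conj (f : ℝ → ℝ) {A : Matrix ι ι 𝕜} (hA : IsSelfAdjoint A)
    (U : unitary (Matrix ι ι 𝕜)) :
    cfc f ((U : Matrix ι ι 𝕜) * A * star U) = U * cfc f A * star U := by
  refine ((Unitary.conjStarAlgAut 𝕜 _ U).toStarAlgHom.map_cfc f A
    (A.finite_real_spectrum.continuousOn _) ?_ hA).symm
  change Continuous fun M : Matrix ι ι 𝕜 => (U : Matrix ι ι 𝕜) * M * star U
  fun_prop

theorem hasDerivAt_cfc_of_hasDerivAt_commutator (f : ℝ → ℝ) {τ : ℝ → Matrix ι ι 𝕜}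
    {K : Matrix ι ι 𝕜} (hK : K ∈ skewAdjoint (Matrix ι ι 𝕜))
    (hτ : ∀ u, HasDerivAt τ (K * τ u - τ u * K) u) {t : ℝ} (ht : IsSelfAdjoint (τ t)) :
    HasDerivAt (fun s => cfc f (τ s)) (K * cfc f (τ t) - cfc f (τ t) * K) t := by
  let := Matrix.linftyOpNormedRing (n := ι) (α := 𝕜)
  let := Matrix.linftyOpNormedAlgebra (n := ι) (α := 𝕜) (R := ℝ)
  have hstar : ∀ s : ℝ, star (exp ((s - t) • K)) = exp ((t - s) • K) := fun s => by
    rw [star_eq_conjTranspose, ← Matrix.exp_conjTranspose, conjTranspose_smul, star_trivial,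
      ← star_eq_conjTranspose, skewAdjoint.mem_iff.mp hK, smul_neg, ← neg_smul, neg_sub]
  have hU : ∀ s : ℝ, exp ((s - t) • K) ∈ unitary (Matrix ι ι 𝕜) := fun s =>
    Unitary.mem_iff.2 ⟨by rw [hstar]; exact exp_sub_smul_mul_exp_sub_smul K t s,
      by rw [hstar]; exact exp_sub_smul_mul_exp_sub_smul K s t⟩
  have hconj : ∀ s, cfc f (τ s) = exp ((s - t) • K) * cfc f (τ t) * exp ((t - s) • K) := by
    intro s
    have h := cfc_unitary_conj f ht ⟨_, hU s⟩
    rw [Unitary.coe_star, hstar] at h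
    rw [eq_exp_smul_conj_of_hasDerivAt_commutator K hτ s t]
    exact h
  rw [funext hconj]
  exact hasDerivAt_exp_smul_conj K (cfc f (τ t)) t

end MatrixFlow

theorem quantum_relative_entropy_production_closed_general
    {n : ℕ} (H ΔH : Matrix (Fin n) (Fin n) ℂ)
    (hH : H.IsHermitian) (hΔH : ΔH.IsHermitian)
    (hbar : ℝ) (hpos : 0 < hbar)
    (ρ τ ρ' τ' : ℝ → Matrix (Fin n) (Fin n) ℂ)
    (hρpd : ∀ t, (ρ t).PosDef) (hτpd : ∀ t, (τ t).PosDef)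
    (hρdiff : ∀ t i j, HasDerivAt (fun s => ρ s i j) (ρ' t i j) t)
    (hτdiff : ∀ t i j, HasDerivAt (fun s => τ s i j) (τ' t i j) t)
    -- Landau–von Neumann equations: ihbar dρ/dt = [H, ρ], ihbar dρ̃/dt = [H + ΔH, ρ̃]
    (hρeq : ∀ t, (Complex.I * (hbar : ℂ)) • ρ' t = H * ρ t - ρ t * H)
    (hτeq : ∀ t, (Complex.I * (hbar : ℂ)) • τ' t = (H + ΔH) * τ t - τ t * (H + ΔH)) :
    ∀ t : ℝ, HasDerivAt
      (fun s => Matrix.trace (ρ s * (mlog (hρpd s).1 - mlog (hτpd s).1)))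
      ((Complex.I / (hbar : ℂ)) *
        Matrix.trace (ρ t * (ΔH * mlog (hτpd t).1 - mlog (hτpd t).1 * ΔH))) t := by
  intro t
  set c : ℂ := Complex.I * (hbar : ℂ)
  have hc : c ≠ 0 := mul_ne_zero Complex.I_ne_zero (by exact_mod_cast hpos.ne')
  have hc_skew : c⁻¹ ∈ skewAdjoint ℂ := by
    simp [c, skewAdjoint.mem_iff, Complex.conj_I, Complex.conj_ofReal]
  have hρ := hasDerivAt_inv_smul_commutator hc hρdiff hρeq
  have hτ := hasDerivAt_inv_smul_commutator hc hτdiff hτeq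
  have hentropy := hasDerivAt_trace_mul_of_commutator (hρ t)
    (hasDerivAt_cfc_of_hasDerivAt_commutator Real.log
      (hH.isSelfAdjoint.smul_mem_skewAdjoint hc_skew) hρ (hρpd t).1)
  have hcross := hasDerivAt_trace_mul_of_commutator (hρ t)
    (hasDerivAt_cfc_of_hasDerivAt_commutator Real.log
      ((hH.add hΔH).isSelfAdjoint.smul_mem_skewAdjoint hc_skew) hτ (hτpd t).1)
  have hmlog : ∀ {A : Matrix (Fin n) (Fin n) ℂ} (hA : A.IsHermitian), mlog hA = cfc Real.log A :=
    fun hA => (hA.cfc_eq Real.log).symm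
  have hD : (fun s => trace (ρ s * (mlog (hρpd s).1 - mlog (hτpd s).1))) =
      fun s => trace (ρ s * cfc Real.log (ρ s)) - trace (ρ s * cfc Real.log (τ s)) := by
    funext s
    rw [hmlog, hmlog, Matrix.mul_sub, trace_sub]
  have hinv : c⁻¹ = -(Complex.I / (hbar : ℂ)) := by
    rw [mul_inv, Complex.inv_I, div_eq_mul_inv, neg_mul]
  rw [hD]
  refine (hentropy.fun_sub hcross).congr_deriv ?_
  rw [sub_self, ← smul_sub, add_sub_cancel_left, zero_mul, mul_zero, sub_self, mul_zero,
    trace_zero, zero_sub, smul_mul_assoc, mul_smul_comm, ← smul_sub, mul_smul_comm, trace_smul,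
    hinv, smul_eq_mul, neg_mul, neg_neg, hmlog]

/-- **Relative entropy production for perturbed closed quantum evolutions.**
If `ρ_t` and `ρ̃_t` (written `τ`) are differentiable families of positive definite unit-trace
matrices solving the Landau–von Neumann equations `ihbar dρ/dt = [H, ρ]` and
`ihbar dρ̃/dt = [H + ΔH, ρ̃]`, then `D(ρ_t‖ρ̃_t) = tr(ρ_t(log ρ_t - log ρ̃_t))` is differentiable
and `d/dt D(ρ_t‖ρ̃_t) = (i/hbar) tr(ρ_t [ΔH, log ρ̃_t])`. -/
theorem quantum_relative_entropy_production_closed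
    {n : ℕ} (H ΔH : Matrix (Fin n) (Fin n) ℂ)
    (hH : H.IsHermitian) (hΔH : ΔH.IsHermitian)
    (hbar : ℝ) (hpos : 0 < hbar)
    (ρ τ ρ' τ' : ℝ → Matrix (Fin n) (Fin n) ℂ)
    (hρpd : ∀ t, (ρ t).PosDef) (hτpd : ∀ t, (τ t).PosDef)
    (hρtr : ∀ t, (ρ t).trace = 1) (hτtr : ∀ t, (τ t).trace = 1)
    (hρdiff : ∀ t i j, HasDerivAt (fun s => ρ s i j) (ρ' t i j) t)
    (hτdiff : ∀ t i j, HasDerivAt (fun s => τ s i j) (τ' t i j) t)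
    -- Landau–von Neumann equations: ihbar dρ/dt = [H, ρ], ihbar dρ̃/dt = [H + ΔH, ρ̃]
    (hρeq : ∀ t, (Complex.I * (hbar : ℂ)) • ρ' t = H * ρ t - ρ t * H)
    (hτeq : ∀ t, (Complex.I * (hbar : ℂ)) • τ' t = (H + ΔH) * τ t - τ t * (H + ΔH)) :
    ∀ t : ℝ, HasDerivAt
      (fun s => Matrix.trace (ρ s * (mlog (hρpd s).1 - mlog (hτpd s).1)))
      ((Complex.I / (hbar : ℂ)) *
        Matrix.trace (ρ t * (ΔH * mlog (hτpd t).1 - mlog (hτpd t).1 * ΔH))) t :=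
  quantum_relative_entropy_production_closed_general H ΔH hH hΔH hbar hpos ρ τ ρ' τ' hρpd hτpd
    hρdiff hτdiff hρeq hτeq
end

section
/- Let H be a Hermitian n×n complex matrix, let ħ > 0, and let t ↦ ρ_t be a differentiable family of positive definite, unit-trace n×n complex matrices satisfying the Landau–von Neumann equation iħ dρ_t/dt = [H, ρ_t]. Then the von Neumann entropy is invariant under the evolution: d/dt tr(ρ_t log ρ_t) = 0 for all t. -/
open Matrix
open scoped ComplexOrder

/-!
Put `B = (iħ)⁻¹ H`, which is skew-Hermitian. The curve `exp(-tB) ρ_t exp(tB)` has zero derivative,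
so `ρ_t = U_t ρ_0 U_t*` with `U_t = exp(tB)` unitary. The continuous functional calculus commutes
with unitary conjugation, hence `ρ_t log ρ_t` is unitarily conjugate to `ρ_0 log ρ_0` and the trace
`tr(ρ_t log ρ_t)` does not depend on `t`.
-/

open NormedSpace Unitary

section ExpConjugation

variable {𝔸 : Type*} [NormedRing 𝔸] [NormedAlgebra ℝ 𝔸] [CompleteSpace 𝔸]

theorem exp_smul_mul_exp_smul_neg (B : 𝔸) (t : ℝ) : exp (t • B) * exp (t • -B) = 1 := by
  let := NormedAlgebra.restrictScalars ℚ ℝ 𝔸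
  rw [← exp_add_of_commute ((Commute.refl B).neg_right.smul_left t |>.smul_right t), smul_neg,
    add_neg_cancel, exp_zero]

theorem eq_exp_smul_mul_mul_exp_smul_neg_of_hasDerivAt {ρ : ℝ → 𝔸} {B : 𝔸}
    (hρ : ∀ t, HasDerivAt ρ (B * ρ t - ρ t * B) t) (t : ℝ) :
    ρ t = exp (t • B) * ρ 0 * exp (t • -B) := by
  have hderiv : ∀ s, HasDerivAt (fun s => exp (s • -B) * ρ s * exp (s • B)) 0 s := fun s => by
    convert ((hasDerivAt_exp_smul_const (-B) s).fun_mul (hρ s)).fun_mul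
      (hasDerivAt_exp_smul_const' B s) using 1
    noncomm_ring
  have hconst : exp (t • -B) * ρ t * exp (t • B) = ρ 0 := by
    simpa using is_const_of_deriv_eq_zero (fun s => (hderiv s).differentiableAt)
      (fun s => (hderiv s).deriv) t 0
  calc ρ t = exp (t • B) * exp (t • -B) * ρ t * (exp (t • B) * exp (t • -B)) := by
        rw [exp_smul_mul_exp_smul_neg, one_mul, mul_one]
    _ = exp (t • B) * ρ 0 * exp (t • -B) := by rw [← hconst]; noncomm_ring

variable [StarRing 𝔸] [ContinuousStar 𝔸] [StarModule ℝ 𝔸]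

theorem exp_smul_mem_unitary_of_mem_skewAdjoint {B : 𝔸} (hB : B ∈ skewAdjoint 𝔸) (t : ℝ) :
    exp (t • B) ∈ unitary 𝔸 := by
  let := NormedAlgebra.restrictScalars ℚ ℝ 𝔸
  exact exp_mem_unitary_of_mem_skewAdjoint (skewAdjoint.smul_mem t hB)

theorem exists_unitary_eq_mul_mul_star_of_hasDerivAt {ρ : ℝ → 𝔸} {B : 𝔸}
    (hB : B ∈ skewAdjoint 𝔸) (hρ : ∀ t, HasDerivAt ρ (B * ρ t - ρ t * B) t) (t : ℝ) :
    ∃ u : unitary 𝔸, ρ t = u * ρ 0 * (star u : 𝔸) := by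
  refine ⟨⟨exp (t • B), exp_smul_mem_unitary_of_mem_skewAdjoint hB t⟩, ?_⟩
  rw [eq_exp_smul_mul_mul_exp_smul_neg_of_hasDerivAt hρ t]
  simp only [star_exp, star_smul, star_trivial, skewAdjoint.mem_iff.1 hB]

end ExpConjugation

namespace Matrix

theorem hasDerivAt_iff_hasDerivAt_apply {m n α : Type*} [Fintype n] [NormedAddCommGroup α]
    [NormedSpace ℝ α] {f : ℝ → Matrix m n α} {f' : Matrix m n α} {t : ℝ} :
    HasDerivAt f f' t ↔ ∀ i j, HasDerivAt (fun s => f s i j) (f' i j) t :=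
  hasDerivAt_pi.trans (forall_congr' fun _ => hasDerivAt_pi)

variable {𝕜 : Type*} [RCLike 𝕜] {n : Type*} [Fintype n] [DecidableEq n]

theorem cfc_conjStarAlgAut (f : ℝ → ℝ) (u : unitary (Matrix n n 𝕜)) (A : Matrix n n 𝕜) :
    cfc f (conjStarAlgAut 𝕜 _ u A) = conjStarAlgAut 𝕜 _ u (cfc f A) := by
  by_cases hA : IsSelfAdjoint A
  · have hf : ContinuousOn f (spectrum ℝ A) := by
      rw [continuousOn_iff_continuous_domRestrict]; fun_prop
    exact (StarAlgHomClass.map_cfc (conjStarAlgAut 𝕜 _ u) f A hf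
      ((continuous_const.mul continuous_id).mul continuous_const) hA (hA.conjugate _)).symm
  · have hA' : ¬ IsSelfAdjoint (conjStarAlgAut 𝕜 _ u A) := fun h => hA <|
      (conjStarAlgAut 𝕜 _ u).symm_apply_apply A ▸ h.map (conjStarAlgAut 𝕜 _ u).symm
    rw [cfc_apply_of_not_predicate _ hA, cfc_apply_of_not_predicate _ hA', map_zero]

theorem trace_conjStarAlgAut (u : unitary (Matrix n n 𝕜)) (A : Matrix n n 𝕜) :
    (conjStarAlgAut 𝕜 _ u A).trace = A.trace := by
  rw [conjStarAlgAut_apply, trace_mul_cycle, coe_star_mul_self, one_mul]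

end Matrix

theorem trace_mul_mlog_eq_of_eq_conjStarAlgAut {n : ℕ} {A B : Matrix (Fin n) (Fin n) ℂ}
    (hA : A.IsHermitian) (hB : B.IsHermitian) (u : unitary (Matrix (Fin n) (Fin n) ℂ))
    (h : B = conjStarAlgAut ℂ _ u A) :
    (B * mlog hB).trace = (A * mlog hA).trace := by
  subst h
  rw [mlog, mlog, ← hA.cfc_eq, ← hB.cfc_eq, cfc_conjStarAlgAut, ← map_mul, trace_conjStarAlgAut]

theorem von_neumann_entropy_invariant_general
    {n : ℕ} (H : Matrix (Fin n) (Fin n) ℂ) (hH : H.IsHermitian)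
    (hbar : ℝ) (hpos : 0 < hbar)
    (ρ ρ' : ℝ → Matrix (Fin n) (Fin n) ℂ)
    (hρpd : ∀ t, (ρ t).PosDef)
    (hρdiff : ∀ t i j, HasDerivAt (fun s => ρ s i j) (ρ' t i j) t)
    -- Landau–von Neumann equation: iħ dρ/dt = [H, ρ]
    (hρeq : ∀ t, (Complex.I * (hbar : ℂ)) • ρ' t = H * ρ t - ρ t * H) :
    ∀ t : ℝ, HasDerivAt
      (fun s => Matrix.trace (ρ s * mlog (hρpd s).1)) 0 t := by
  intro t
  set B := (Complex.I * (hbar : ℂ))⁻¹ • H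
  have hI : Complex.I * (hbar : ℂ) ≠ 0 :=
    mul_ne_zero Complex.I_ne_zero (Complex.ofReal_ne_zero.2 hpos.ne')
  have hB : B ∈ skewAdjoint (Matrix (Fin n) (Fin n) ℂ) :=
    hH.isSelfAdjoint.smul_mem_skewAdjoint (by simp [skewAdjoint.mem_iff])
  have hρ : ∀ s, HasDerivAt ρ (B * ρ s - ρ s * B) s := fun s => by
    rw [smul_mul_assoc, mul_smul_comm, ← smul_sub, ← hρeq s, smul_smul, inv_mul_cancel₀ hI,
      one_smul]
    exact Matrix.hasDerivAt_iff_hasDerivAt_apply.2 (hρdiff s)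
  have hconst : ∀ s, (ρ s * mlog (hρpd s).1).trace = (ρ 0 * mlog (hρpd 0).1).trace := fun s => by
    -- The operator norm makes matrices a C⋆-algebra; its topology is the entrywise one.
    obtain ⟨u, hu⟩ := open scoped Matrix.Norms.L2Operator in
      exists_unitary_eq_mul_mul_star_of_hasDerivAt hB hρ s
    exact trace_mul_mlog_eq_of_eq_conjStarAlgAut (hρpd 0).1 (hρpd s).1 u hu
  simpa only [hconst] using hasDerivAt_const t _

/-- **Invariance of the von Neumann entropy under Hamiltonian evolution.**
If `ρ_t` is a differentiable family of positive definite unit-trace matrices solving the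
Landau–von Neumann equation `iħ dρ/dt = [H, ρ]` with Hermitian `H`, then
`d/dt tr(ρ_t log ρ_t) = 0` for all `t`. -/
theorem von_neumann_entropy_invariant
    {n : ℕ} (H : Matrix (Fin n) (Fin n) ℂ) (hH : H.IsHermitian)
    (hbar : ℝ) (hpos : 0 < hbar)
    (ρ ρ' : ℝ → Matrix (Fin n) (Fin n) ℂ)
    (hρpd : ∀ t, (ρ t).PosDef)
    (hρtr : ∀ t, (ρ t).trace = 1)
    (hρdiff : ∀ t i j, HasDerivAt (fun s => ρ s i j) (ρ' t i j) t)
    -- Landau–von Neumann equation: iħ dρ/dt = [H, ρ]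
    (hρeq : ∀ t, (Complex.I * (hbar : ℂ)) • ρ' t = H * ρ t - ρ t * H) :
    ∀ t : ℝ, HasDerivAt
      (fun s => Matrix.trace (ρ s * mlog (hρpd s).1)) 0 t :=
  von_neumann_entropy_invariant_general H hH hbar hpos ρ ρ' hρpd hρdiff hρeq
end
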